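/- Let k ≥ 0. The tensor-product Nédélec sequence on ℝ³, 𝒬_{k+1} →∇→ E →∇×→ V →∇·→ 𝒬_k, is exact, where E := 𝒫_{k,k+1,k+1} × 𝒫_{k+1,k,k+1} × 𝒫_{k+1,k+1,k} and V := 𝒫_{k+1,k,k} × 𝒫_{k,k+1,k} × 𝒫_{k,k,k+1}. Exactness means: (i) the kernel of ∇ on 𝒬_{k+1} consists exactly of the constants; (ii) ∇𝒬_{k+1} = {v ∈ E : ∇×v = 0}; (iii) ∇×E = {v ∈ V : ∇·v = 0}; (iv) ∇· maps V onto 𝒬_k. -/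

import Mathlib

open MvPolynomial

/-- Polynomials on `ℝ³`. -/
abbrev R3 := MvPolynomial (Fin 3) ℝ

/-- Polynomial vector fields on `ℝ³`. -/
abbrev Vec3 := R3 × R3 × R3

/-- The gradient `∇p = (∂ₓ p, ∂_y p, ∂_z p)`. -/
noncomputable def grad3 (p : R3) : Vec3 := (pderiv 0 p, pderiv 1 p, pderiv 2 p)

/-- The three-dimensional vector curl. -/
noncomputable def curl3 (v : Vec3) : Vec3 :=
  (pderiv 1 v.2.2 - pderiv 2 v.2.1,
   pderiv 2 v.1 - pderiv 0 v.2.2,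
   pderiv 0 v.2.1 - pderiv 1 v.1)

/-- The divergence `∇·v = ∂ₓ v₁ + ∂_y v₂ + ∂_z v₃`. -/
noncomputable def div3 (v : Vec3) : R3 :=
  pderiv 0 v.1 + pderiv 1 v.2.1 + pderiv 2 v.2.2

/-- Membership in `𝒫_{a,b,c}`: degree at most `a` in `x`, `b` in `y`, `c` in `z`. -/
def memPabc (a b c : ℕ) (p : R3) : Prop :=
  p.degreeOf 0 ≤ a ∧ p.degreeOf 1 ≤ b ∧ p.degreeOf 2 ≤ c

/-- Membership in `𝒬_m = 𝒫_{m,m,m}`. -/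
def memQ3 (m : ℕ) (p : R3) : Prop := memPabc m m m p

/-- Membership in `E = 𝒫_{k,k+1,k+1} × 𝒫_{k+1,k,k+1} × 𝒫_{k+1,k+1,k}`. -/
def memNedQE (k : ℕ) (v : Vec3) : Prop :=
  memPabc k (k + 1) (k + 1) v.1 ∧ memPabc (k + 1) k (k + 1) v.2.1 ∧
    memPabc (k + 1) (k + 1) k v.2.2

/-- Membership in `V = 𝒫_{k+1,k,k} × 𝒫_{k,k+1,k} × 𝒫_{k,k,k+1}`. -/
def memNedQV (k : ℕ) (v : Vec3) : Prop :=
  memPabc (k + 1) k k v.1 ∧ memPabc k (k + 1) k v.2.1 ∧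
    memPabc k k (k + 1) v.2.2

namespace Ned

lemma sub_add_single {n : Fin 3 →₀ ℕ} {i : Fin 3} (h : n i ≠ 0) :
    n - Finsupp.single i 1 + Finsupp.single i 1 = n := by
  ext j
  rcases eq_or_ne j i with rfl | hj
  · simp only [Finsupp.add_apply, Finsupp.tsub_apply, Finsupp.single_eq_same]
    omega
  · simp [Finsupp.single_apply, (Ne.symm hj : i ≠ j)]

/-- Antiderivative in variable `i`. -/
noncomputable def aint (i : Fin 3) (p : R3) : R3 :=
  ∑ m ∈ p.support, monomial (m + Finsupp.single i 1) (coeff m p / ((m i : ℝ) + 1))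

/-- Evaluation at `x_i = 0`. -/
noncomputable def ev0 (i : Fin 3) (p : R3) : R3 :=
  ∑ m ∈ p.support.filter (fun m => m i = 0), monomial m (coeff m p)

lemma coeff_aint (i : Fin 3) (p : R3) (n : Fin 3 →₀ ℕ) :
    coeff n (aint i p) =
      if n i = 0 then 0 else coeff (n - Finsupp.single i 1) p / (n i : ℝ) := by
  classical
  rw [aint, coeff_sum]
  simp only [coeff_monomial]
  by_cases h : n i = 0
  · rw [if_pos h]
    refine Finset.sum_eq_zero fun m _ => ?_
    rw [if_neg]
    intro he
    have := congrArg (fun f : Fin 3 →₀ ℕ => f i) he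
    simp only [Finsupp.add_apply, Finsupp.single_eq_same, h] at this
    omega
  · rw [if_neg h]
    have key : ∀ m ∈ p.support,
        (if m + Finsupp.single i 1 = n then coeff m p / ((m i : ℝ) + 1) else 0) =
        (if m = n - Finsupp.single i 1 then coeff m p / ((m i : ℝ) + 1) else 0) := by
      intro m _
      congr 1
      simp only [eq_iff_iff]
      constructor
      · rintro rfl; rw [add_tsub_cancel_right]
      · rintro rfl; exact sub_add_single h
    rw [Finset.sum_congr rfl key, Finset.sum_ite_eq' _ _ _]
    have hc : (((n - Finsupp.single i 1 : Fin 3 →₀ ℕ) i : ℝ) + 1) = (n i : ℝ) := by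
      rw [Finsupp.tsub_apply, Finsupp.single_eq_same]
      have h1 : n i - 1 + 1 = n i := by omega
      exact_mod_cast congrArg (Nat.cast : ℕ → ℝ) h1
    rw [hc]
    split_ifs with hm
    · rfl
    · rw [notMem_support_iff.mp hm, zero_div]

lemma coeff_ev0 (i : Fin 3) (p : R3) (n : Fin 3 →₀ ℕ) :
    coeff n (ev0 i p) = if n i = 0 then coeff n p else 0 := by
  classical
  rw [ev0, coeff_sum]
  simp only [coeff_monomial]
  rw [Finset.sum_ite_eq' _ n _]
  split_ifs with h1 h2 h2
  · rfl
  · exact absurd (Finset.mem_filter.mp h1).2 h2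
  · exact (notMem_support_iff.mp fun hm => h1 (Finset.mem_filter.mpr ⟨hm, h2⟩)).symm
  · rfl



lemma coeff_pderiv (i : Fin 3) (p : R3) (n : Fin 3 →₀ ℕ) :
    coeff n (pderiv i p) = ((n i : ℝ) + 1) * coeff (n + Finsupp.single i 1) p := by
  classical
  induction p using MvPolynomial.induction_on' with
  | monomial m a =>
    rw [pderiv_monomial, coeff_monomial, coeff_monomial]
    by_cases h : m = n + Finsupp.single i 1
    · subst h
      rw [if_pos, if_pos rfl]
      · push_cast [Finsupp.add_apply, Finsupp.single_eq_same]; ring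
      · exact add_tsub_cancel_right _ _
    · rw [if_neg h]
      by_cases h2 : m - Finsupp.single i 1 = n
      · have hmi : m i = 0 := by
          by_contra hmi
          exact h (by rw [← h2, sub_add_single hmi])
        rw [if_pos h2, hmi]; simp
      · rw [if_neg h2, mul_zero]
  | add p q hp hq =>
    rw [map_add, coeff_add, coeff_add, hp, hq]; ring

lemma add_single_apply_self (n : Fin 3 →₀ ℕ) (i : Fin 3) :
    ((n + Finsupp.single i 1 : Fin 3 →₀ ℕ)) i = n i + 1 := by
  simp

lemma add_single_apply_ne {i j : Fin 3} (h : i ≠ j) (n : Fin 3 →₀ ℕ) :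
    ((n + Finsupp.single j 1 : Fin 3 →₀ ℕ)) i = n i := by
  simp [Finsupp.single_apply, (Ne.symm h : j ≠ i)]

lemma sub_single_apply_ne {i j : Fin 3} (h : i ≠ j) (n : Fin 3 →₀ ℕ) :
    ((n - Finsupp.single j 1 : Fin 3 →₀ ℕ)) i = n i := by
  simp [Finsupp.tsub_apply, Finsupp.single_apply, (Ne.symm h : j ≠ i)]

lemma cast_sub_single {n : Fin 3 →₀ ℕ} {i : Fin 3} (h : n i ≠ 0) :
    (((n - Finsupp.single i 1 : Fin 3 →₀ ℕ) i : ℝ) + 1) = (n i : ℝ) := by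
  rw [Finsupp.tsub_apply, Finsupp.single_eq_same]
  have h1 : n i - 1 + 1 = n i := by omega
  exact_mod_cast congrArg (Nat.cast : ℕ → ℝ) h1

lemma add_sub_single_comm {i j : Fin 3} (h : i ≠ j) (n : Fin 3 →₀ ℕ) :
    n + Finsupp.single j 1 - Finsupp.single i 1
      = n - Finsupp.single i 1 + Finsupp.single j 1 := by
  ext m
  simp only [Finsupp.tsub_apply, Finsupp.add_apply, Finsupp.single_apply]
  rcases eq_or_ne i m with rfl | hi
  · rcases eq_or_ne j i with rfl | hj
    · exact absurd rfl h.symm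
    · simp [hj]
  · rcases eq_or_ne j m with rfl | hj
    · simp [hi]
    · simp [hi, hj]

lemma pderiv_aint_self (i : Fin 3) (p : R3) : pderiv i (aint i p) = p := by
  ext n
  rw [coeff_pderiv, coeff_aint]
  rw [if_neg (by rw [add_single_apply_self]; omega), add_tsub_cancel_right,
    add_single_apply_self]
  push_cast
  field_simp

lemma aint_pderiv_self (i : Fin 3) (p : R3) : aint i (pderiv i p) = p - ev0 i p := by
  ext n
  rw [coeff_aint, coeff_sub, coeff_ev0]
  split_ifs with h
  · ring
  · rw [coeff_pderiv, sub_add_single h, cast_sub_single h, sub_zero]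
    field_simp [Nat.cast_ne_zero.mpr h]

lemma pderiv_comm3 (i j : Fin 3) (p : R3) :
    pderiv i (pderiv j p) = pderiv j (pderiv i p) := by
  rcases eq_or_ne i j with rfl | h
  · rfl
  ext n
  rw [coeff_pderiv, coeff_pderiv, coeff_pderiv, coeff_pderiv,
    add_single_apply_ne h.symm, add_single_apply_ne h,
    add_right_comm]
  ring

lemma pderiv_aint_comm {i j : Fin 3} (h : j ≠ i) (p : R3) :
    pderiv j (aint i p) = aint i (pderiv j p) := by
  ext n
  rw [coeff_pderiv, coeff_aint, coeff_aint, add_single_apply_ne (Ne.symm h)]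
  split_ifs with hni
  · rw [mul_zero]
  · rw [coeff_pderiv, sub_single_apply_ne h, add_sub_single_comm (Ne.symm h)]
    ring

lemma pderiv_ev0_self (i : Fin 3) (p : R3) : pderiv i (ev0 i p) = 0 := by
  ext n
  rw [coeff_pderiv, coeff_ev0, if_neg (by rw [add_single_apply_self]; omega)]
  simp

lemma pderiv_ev0_comm {i j : Fin 3} (h : j ≠ i) (p : R3) :
    pderiv j (ev0 i p) = ev0 i (pderiv j p) := by
  ext n
  rw [coeff_pderiv, coeff_ev0, coeff_ev0, add_single_apply_ne (Ne.symm h)]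
  split_ifs with hni
  · rw [coeff_pderiv]
  · rw [mul_zero]

lemma aint_zero (i : Fin 3) : aint i (0 : R3) = 0 := by
  ext n; rw [coeff_aint]; split_ifs <;> simp

lemma aint_add (i : Fin 3) (p q : R3) : aint i (p + q) = aint i p + aint i q := by
  ext n
  rw [coeff_add, coeff_aint, coeff_aint, coeff_aint]
  split_ifs
  · ring
  · rw [coeff_add]; ring

-- degree lemmas
lemma mem_support_le {j : Fin 3} {p : R3} {d : ℕ} (h : degreeOf j p ≤ d)
    {m : Fin 3 →₀ ℕ} (hm : coeff m p ≠ 0) : m j ≤ d :=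
  degreeOf_le_iff.mp h m (mem_support_iff.mpr hm)

lemma degreeOf_aint_self {i : Fin 3} {p : R3} {d : ℕ} (h : degreeOf i p ≤ d) :
    degreeOf i (aint i p) ≤ d + 1 := by
  rw [degreeOf_le_iff]
  intro m hm
  rw [mem_support_iff, coeff_aint] at hm
  split_ifs at hm with h0
  · exact absurd rfl hm
  · have := mem_support_le h (fun hc => hm (by rw [hc, zero_div]))
    rw [Finsupp.tsub_apply, Finsupp.single_eq_same] at this
    omega

lemma degreeOf_aint_other {i j : Fin 3} (hij : j ≠ i) {p : R3} {d : ℕ}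
    (h : degreeOf j p ≤ d) : degreeOf j (aint i p) ≤ d := by
  rw [degreeOf_le_iff]
  intro m hm
  rw [mem_support_iff, coeff_aint] at hm
  split_ifs at hm with h0
  · exact absurd rfl hm
  · have := mem_support_le h (fun hc => hm (by rw [hc, zero_div]))
    rwa [sub_single_apply_ne hij] at this

lemma degreeOf_pderiv_self {i : Fin 3} {p : R3} {d : ℕ} (h : degreeOf i p ≤ d + 1) :
    degreeOf i (pderiv i p) ≤ d := by
  rw [degreeOf_le_iff]
  intro m hm
  rw [mem_support_iff, coeff_pderiv] at hm
  have := mem_support_le h (right_ne_zero_of_mul hm)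
  rw [add_single_apply_self] at this
  omega

lemma degreeOf_pderiv_other {i j : Fin 3} (hij : j ≠ i) {p : R3} {d : ℕ}
    (h : degreeOf j p ≤ d) : degreeOf j (pderiv i p) ≤ d := by
  rw [degreeOf_le_iff]
  intro m hm
  rw [mem_support_iff, coeff_pderiv] at hm
  have := mem_support_le h (right_ne_zero_of_mul hm)
  rwa [add_single_apply_ne hij] at this

lemma degreeOf_ev0_self (i : Fin 3) (p : R3) {d : ℕ} : degreeOf i (ev0 i p) ≤ d := by
  rw [degreeOf_le_iff]
  intro m hm
  rw [mem_support_iff, coeff_ev0] at hm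
  split_ifs at hm with h0
  · omega
  · exact absurd rfl hm

lemma degreeOf_ev0 {i j : Fin 3} {p : R3} {d : ℕ} (h : degreeOf j p ≤ d) :
    degreeOf j (ev0 i p) ≤ d := by
  rw [degreeOf_le_iff]
  intro m hm
  rw [mem_support_iff, coeff_ev0] at hm
  split_ifs at hm with h0
  · exact mem_support_le h hm
  · exact absurd rfl hm

lemma degreeOf_add3 {i : Fin 3} {a b c : R3} {d : ℕ} (ha : degreeOf i a ≤ d)
    (hb : degreeOf i b ≤ d) (hc : degreeOf i c ≤ d) : degreeOf i (a + b + c) ≤ d :=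
  le_trans (degreeOf_add_le _ _ _)
    (max_le (le_trans (degreeOf_add_le _ _ _) (max_le ha hb)) hc)

lemma degreeOf_sub' {i : Fin 3} {a b : R3} {d : ℕ} (ha : degreeOf i a ≤ d)
    (hb : degreeOf i b ≤ d) : degreeOf i (a - b) ≤ d :=
  le_trans (degreeOf_sub_le _ _ _) (max_le ha hb)

end Ned

namespace Ned

lemma ev0_zero (i : Fin 3) : ev0 i (0 : R3) = 0 := by
  ext n; rw [coeff_ev0]; split_ifs <;> simp

lemma const_of_grad_zero {p : R3} (h : ∀ i : Fin 3, pderiv i p = 0) :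
    ∃ c : ℝ, p = C c := by
  refine ⟨coeff 0 p, ?_⟩
  ext n
  rw [coeff_C]
  split_ifs with hn
  · rw [hn]
  · have hex : ∃ i : Fin 3, n i ≠ 0 := by
      by_contra hc
      push_neg at hc
      exact hn (Finsupp.ext fun i => by simp [hc i])
    obtain ⟨i, hi⟩ := hex
    have hz := congrArg (coeff (n - Finsupp.single i 1)) (h i)
    rw [coeff_pderiv, coeff_zero, sub_add_single hi, cast_sub_single hi] at hz
    exact (mul_eq_zero.mp hz).resolve_left (Nat.cast_ne_zero.mpr hi)

end Ned

open Ned in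
/-- The tensor-product Nédélec sequence `𝒬_{k+1} →∇→ E →∇×→ V →∇·→ 𝒬_k` on `ℝ³`
is exact: (i) the kernel of `∇` on `𝒬_{k+1}` consists exactly of the constants;
(ii) `∇𝒬_{k+1} = {v ∈ E : ∇×v = 0}`; (iii) `∇×E = {v ∈ V : ∇·v = 0}`;
(iv) `∇·` maps `V` onto `𝒬_k`. -/
theorem stmt_8 (k : ℕ) :
    (∀ p : R3, memQ3 (k + 1) p → (grad3 p = 0 ↔ ∃ c : ℝ, p = C c)) ∧
    ({v : Vec3 | ∃ p : R3, memQ3 (k + 1) p ∧ v = grad3 p} =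
      {v : Vec3 | memNedQE k v ∧ curl3 v = 0}) ∧
    ({w : Vec3 | ∃ v : Vec3, memNedQE k v ∧ w = curl3 v} =
      {w : Vec3 | memNedQV k w ∧ div3 w = 0}) ∧
    (∀ q : R3, memQ3 k q → ∃ v : Vec3, memNedQV k v ∧ div3 v = q) := by
  refine ⟨?_, ?_, ?_, ?_⟩
  -- Part (i)
  · intro p _
    constructor
    · intro hg
      refine const_of_grad_zero fun i => ?_
      have h0 : pderiv 0 p = 0 := congrArg (fun w : Vec3 => w.1) hg
      have h1 : pderiv 1 p = 0 := congrArg (fun w : Vec3 => w.2.1) hg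
      have h2 : pderiv 2 p = 0 := congrArg (fun w : Vec3 => w.2.2) hg
      fin_cases i <;> assumption
    · rintro ⟨c, rfl⟩
      show ((pderiv 0 (C c) : R3), (pderiv 1 (C c) : R3), (pderiv 2 (C c) : R3))
          = ((0 : R3), (0 : R3), (0 : R3))
      rw [pderiv_C, pderiv_C, pderiv_C]
  -- Part (ii)
  · ext v
    obtain ⟨v1, v2, v3⟩ := v
    simp only [Set.mem_setOf_eq]
    constructor
    · rintro ⟨p, hp, heq⟩
      unfold memQ3 memPabc at hp
      obtain ⟨hp1, hp2, hp3⟩ := hp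
      rw [heq]
      constructor
      · unfold memNedQE memPabc
        exact ⟨⟨degreeOf_pderiv_self hp1, degreeOf_pderiv_other (by decide) hp2,
            degreeOf_pderiv_other (by decide) hp3⟩,
          ⟨degreeOf_pderiv_other (by decide) hp1, degreeOf_pderiv_self hp2,
            degreeOf_pderiv_other (by decide) hp3⟩,
          ⟨degreeOf_pderiv_other (by decide) hp1,
            degreeOf_pderiv_other (by decide) hp2, degreeOf_pderiv_self hp3⟩⟩
      · show (pderiv 1 (pderiv 2 p) - pderiv 2 (pderiv 1 p),
            pderiv 2 (pderiv 0 p) - pderiv 0 (pderiv 2 p),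
            pderiv 0 (pderiv 1 p) - pderiv 1 (pderiv 0 p)) = ((0 : R3), (0 : R3), (0 : R3))
        rw [pderiv_comm3 1 2 p, pderiv_comm3 2 0 p, pderiv_comm3 0 1 p,
          sub_self, sub_self, sub_self]
    · rintro ⟨hE, hcurl⟩
      unfold memNedQE memPabc at hE
      obtain ⟨⟨hE11, hE12, hE13⟩, ⟨hE21, hE22, hE23⟩, hE31, hE32, hE33⟩ := hE
      have hc1' : pderiv 1 v3 = pderiv 2 v2 :=
        sub_eq_zero.mp (congrArg (fun w : Vec3 => w.1) hcurl)
      have hc2' : pderiv 2 v1 = pderiv 0 v3 :=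
        sub_eq_zero.mp (congrArg (fun w : Vec3 => w.2.1) hcurl)
      have hc3' : pderiv 0 v2 = pderiv 1 v1 :=
        sub_eq_zero.mp (congrArg (fun w : Vec3 => w.2.2) hcurl)
      refine ⟨aint 0 v1 + aint 1 (ev0 0 v2) + aint 2 (ev0 1 (ev0 0 v3)), ?_, ?_⟩
      · unfold memQ3 memPabc
        refine ⟨degreeOf_add3 (degreeOf_aint_self hE11)
            (degreeOf_aint_other (by decide) (degreeOf_ev0_self _ _))
            (degreeOf_aint_other (by decide) (degreeOf_ev0 (degreeOf_ev0_self _ _))),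
          degreeOf_add3 (degreeOf_aint_other (by decide) hE12)
            (degreeOf_aint_self (degreeOf_ev0 hE22))
            (degreeOf_aint_other (by decide) (degreeOf_ev0_self _ _)),
          degreeOf_add3 (degreeOf_aint_other (by decide) hE13)
            (degreeOf_aint_other (by decide) (degreeOf_ev0 hE23))
            (degreeOf_aint_self (degreeOf_ev0 (degreeOf_ev0 hE33)))⟩
      · have he0 : pderiv 0 (aint 0 v1 + aint 1 (ev0 0 v2)
            + aint 2 (ev0 1 (ev0 0 v3))) = v1 := by
          rw [map_add, map_add, pderiv_aint_self,
            pderiv_aint_comm (by decide : (0 : Fin 3) ≠ 1), pderiv_ev0_self, aint_zero,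
            pderiv_aint_comm (by decide : (0 : Fin 3) ≠ 2),
            pderiv_ev0_comm (by decide : (0 : Fin 3) ≠ 1), pderiv_ev0_self, ev0_zero,
            aint_zero, add_zero, add_zero]
        have he1 : pderiv 1 (aint 0 v1 + aint 1 (ev0 0 v2)
            + aint 2 (ev0 1 (ev0 0 v3))) = v2 := by
          rw [map_add, map_add, pderiv_aint_comm (by decide : (1 : Fin 3) ≠ 0),
            pderiv_aint_self, pderiv_aint_comm (by decide : (1 : Fin 3) ≠ 2),
            pderiv_ev0_self, aint_zero, add_zero, ← hc3', aint_pderiv_self]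
          ring
        have he2 : pderiv 2 (aint 0 v1 + aint 1 (ev0 0 v2)
            + aint 2 (ev0 1 (ev0 0 v3))) = v3 := by
          rw [map_add, map_add, pderiv_aint_comm (by decide : (2 : Fin 3) ≠ 0), hc2',
            aint_pderiv_self, pderiv_aint_comm (by decide : (2 : Fin 3) ≠ 1),
            pderiv_ev0_comm (by decide : (2 : Fin 3) ≠ 0), ← hc1',
            ← pderiv_ev0_comm (by decide : (1 : Fin 3) ≠ 0),
            aint_pderiv_self, pderiv_aint_self]
          ring
        show ((v1 : R3), (v2 : R3), (v3 : R3)) =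
          (pderiv 0 (aint 0 v1 + aint 1 (ev0 0 v2) + aint 2 (ev0 1 (ev0 0 v3))),
           pderiv 1 (aint 0 v1 + aint 1 (ev0 0 v2) + aint 2 (ev0 1 (ev0 0 v3))),
           pderiv 2 (aint 0 v1 + aint 1 (ev0 0 v2) + aint 2 (ev0 1 (ev0 0 v3))))
        rw [he0, he1, he2]
  -- Part (iii)
  · ext w
    obtain ⟨w1, w2, w3⟩ := w
    simp only [Set.mem_setOf_eq]
    constructor
    · rintro ⟨v, hE, heq⟩
      obtain ⟨v1, v2, v3⟩ := v
      unfold memNedQE memPabc at hE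
      obtain ⟨⟨hE11, hE12, hE13⟩, ⟨hE21, hE22, hE23⟩, hE31, hE32, hE33⟩ := hE
      rw [heq]
      constructor
      · unfold memNedQV memPabc
        exact ⟨⟨degreeOf_sub' (degreeOf_pderiv_other (by decide) hE31)
            (degreeOf_pderiv_other (by decide) hE21),
          degreeOf_sub' (degreeOf_pderiv_self hE32)
            (degreeOf_pderiv_other (by decide) hE22),
          degreeOf_sub' (degreeOf_pderiv_other (by decide) hE33)
            (degreeOf_pderiv_self hE23)⟩,
          ⟨degreeOf_sub' (degreeOf_pderiv_other (by decide) hE11)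
            (degreeOf_pderiv_self hE31),
          degreeOf_sub' (degreeOf_pderiv_other (by decide) hE12)
            (degreeOf_pderiv_other (by decide) hE32),
          degreeOf_sub' (degreeOf_pderiv_self hE13)
            (degreeOf_pderiv_other (by decide) hE33)⟩,
          ⟨degreeOf_sub' (degreeOf_pderiv_self hE21)
            (degreeOf_pderiv_other (by decide) hE11),
          degreeOf_sub' (degreeOf_pderiv_other (by decide) hE22)
            (degreeOf_pderiv_self hE12),
          degreeOf_sub' (degreeOf_pderiv_other (by decide) hE23)
            (degreeOf_pderiv_other (by decide) hE13)⟩⟩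
      · show pderiv 0 (pderiv 1 v3 - pderiv 2 v2) + pderiv 1 (pderiv 2 v1 - pderiv 0 v3)
            + pderiv 2 (pderiv 0 v2 - pderiv 1 v1) = 0
        rw [map_sub, map_sub, map_sub, pderiv_comm3 1 0 v3, pderiv_comm3 2 0 v2,
          pderiv_comm3 2 1 v1]
        ring
    · rintro ⟨hV, hdiv⟩
      unfold memNedQV memPabc at hV
      obtain ⟨⟨hV11, hV12, hV13⟩, ⟨hV21, hV22, hV23⟩, hV31, hV32, hV33⟩ := hV
      have hd : pderiv 0 w1 + pderiv 1 w2 + pderiv 2 w3 = 0 := hdiv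
      refine ⟨((0 : R3), aint 0 w3, aint 1 (ev0 0 w1) - aint 0 w2), ?_, ?_⟩
      · unfold memNedQE memPabc
        refine ⟨⟨by simp, by simp, by simp⟩,
          ⟨degreeOf_aint_self hV31, degreeOf_aint_other (by decide) hV32,
            degreeOf_aint_other (by decide) hV33⟩,
          degreeOf_sub' (degreeOf_aint_other (by decide) (degreeOf_ev0_self _ _))
            (degreeOf_aint_self hV21),
          degreeOf_sub' (degreeOf_aint_self (degreeOf_ev0 hV12))
            (degreeOf_aint_other (by decide) hV22),
          degreeOf_sub' (degreeOf_aint_other (by decide) (degreeOf_ev0 hV13))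
            (degreeOf_aint_other (by decide) hV23)⟩
      · have key : aint 0 (pderiv 0 w1) + aint 0 (pderiv 1 w2)
            + aint 0 (pderiv 2 w3) = 0 := by
          rw [← aint_add, ← aint_add, hd, aint_zero]
        have ftc := aint_pderiv_self 0 w1
        have e1 : pderiv 1 (aint 1 (ev0 0 w1) - aint 0 w2)
            - pderiv 2 (aint 0 w3) = w1 := by
          rw [map_sub, pderiv_aint_self, pderiv_aint_comm (by decide : (1 : Fin 3) ≠ 0),
            pderiv_aint_comm (by decide : (2 : Fin 3) ≠ 0)]
          linear_combination ftc - key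
        have e2 : pderiv 2 (0 : R3)
            - pderiv 0 (aint 1 (ev0 0 w1) - aint 0 w2) = w2 := by
          rw [map_zero, map_sub, pderiv_aint_comm (by decide : (0 : Fin 3) ≠ 1),
            pderiv_ev0_self, aint_zero, pderiv_aint_self]
          ring
        have e3 : pderiv 0 (aint 0 w3) - pderiv 1 (0 : R3) = w3 := by
          rw [map_zero, pderiv_aint_self, sub_zero]
        show ((w1 : R3), (w2 : R3), (w3 : R3)) =
          (pderiv 1 (aint 1 (ev0 0 w1) - aint 0 w2) - pderiv 2 (aint 0 w3),
           pderiv 2 (0 : R3) - pderiv 0 (aint 1 (ev0 0 w1) - aint 0 w2),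
           pderiv 0 (aint 0 w3) - pderiv 1 (0 : R3))
        rw [e1, e2, e3]
  -- Part (iv)
  · intro q hq
    unfold memQ3 memPabc at hq
    refine ⟨(aint 0 q, 0, 0), ?_, ?_⟩
    · unfold memNedQV memPabc
      refine ⟨⟨degreeOf_aint_self hq.1, degreeOf_aint_other (by decide) hq.2.1,
        degreeOf_aint_other (by decide) hq.2.2⟩, ?_, ?_⟩ <;>
        exact ⟨by simp, by simp, by simp⟩
    · show pderiv 0 (aint 0 q) + pderiv 1 (0 : R3) + pderiv 2 (0 : R3) = q
      rw [pderiv_aint_self, map_zero, map_zero, add_zero, add_zero]
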